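/- (Lemma 4.4, case (i).) Let {x^k} be a sequence generated by Algorithm 3.1 with data M > 0 and x⁰, let r > 0 be such that M is a Lipschitz constant of f on the closed ball B(x⁰, r), and suppose the closed ball B(x⁰, r/2) contains a point of the topological interior of Q. Then {x^k} has at least one accumulation point, and every accumulation point x* of {x^k} satisfies f(x*) ≤ 0 (i.e., x* ∈ Q). -/

import Mathlib

open Filter Topology

noncomputable section

abbrev Euc (n : ℕ) := EuclideanSpace ℝ (Fin n)

/-- `ξ` is a subgradient of `g` at `x`. -/
def IsSubgradAt {n : ℕ} (g : Euc n → ℝ) (x ξ : Euc n) : Prop :=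
  ∀ y : Euc n, g x + (inner ℝ ξ (y - x) : ℝ) ≤ g y

/-- The envelope `f(x) = max_i f_i(x)` of finitely many functions. -/
def envl {n m : ℕ} [NeZero m] (f : Fin m → Euc n → ℝ) (x : Euc n) : ℝ :=
  Finset.univ.sup' Finset.univ_nonempty fun i => f i x

/-- The sequence `x` with relaxation parameters `lam` is generated by Algorithm 3.1
with data `M` for the family `f`. -/
def IsAlgSeq {n m : ℕ} [NeZero m] (f : Fin m → Euc n → ℝ) (M : ℝ)
    (x : ℕ → Euc n) (lam : ℕ → ℝ) : Prop :=
  ∀ k : ℕ, 0 ≤ lam k ∧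
    max 0 (envl f (x k)) ≤ lam k * M ^ 2 ∧
    lam k * M ^ 2 ≤ 2 * max 0 (envl f (x k)) ∧
    ∃ (w : Fin m → ℝ) (ξ : Fin m → Euc n),
      (∀ i, 0 ≤ w i) ∧ (∑ i, w i) = 1 ∧
      (∀ i, f i (x k) < envl f (x k) → w i = 0) ∧
      (∀ i, IsSubgradAt (f i) (x k) (ξ i)) ∧
      x (k + 1) = x k - lam k • ∑ i, w i • ξ i

/-!
Fejér monotonicity. `Q` contains a closed ball `B(w, ρ)` whose centre lies strictly within `r/2`
of `x⁰`. Testing the subgradient inequality at the point of `B(w, ρ)` farthest along `ν` gives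
`⟨ν, x - w⟩ ≥ f(x) + ρ ‖ν‖`, and Lipschitz continuity gives `‖ν‖ ≤ M` as long as `x` lies in the
open ball `B(x⁰, r)`. With the Polyak step length this makes `‖x^k - w‖²` drop by at least a fixed
multiple of `max(0, f(x^k))²`, which in turn keeps every iterate within `‖x⁰ - w‖ < r/2` of `w`.
So the iterates are bounded, `∑ max(0, f(x^k))² < ∞`, and continuity of `f` on `B(x⁰, r)`
passes `f(x^k)₊ → 0` on to every accumulation point.
-/

open scoped InnerProductSpace

section InnerProductSpace

variable {E : Type*} [NormedAddCommGroup E] [InnerProductSpace ℝ E]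

lemma norm_le_of_subgradient_of_lipschitzOnWith {F : E → ℝ} {K : NNReal} {x₀ p ν : E} {r : ℝ}
    (hF : LipschitzOnWith K F (Metric.closedBall x₀ r)) (hp : p ∈ Metric.ball x₀ r)
    (hν : ∀ y, F p + ⟪ν, y - p⟫_ℝ ≤ F y) : ‖ν‖ ≤ K := by
  rcases eq_or_ne ν 0 with rfl | hν0
  · simp
  have hνpos : 0 < ‖ν‖ := norm_pos_iff.mpr hν0
  set ρ := r - dist p x₀
  have hρ : 0 < ρ := sub_pos.mpr hp
  set y := p + (ρ / ‖ν‖) • ν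
  have hyp : dist y p = ρ := by
    rw [dist_eq_norm, add_sub_cancel_left, norm_smul, Real.norm_of_nonneg (by positivity),
      div_mul_cancel₀ _ hνpos.ne']
  have hy : y ∈ Metric.closedBall x₀ r := by
    rw [Metric.mem_closedBall]
    linarith [dist_triangle y p x₀]
  have hinner : ⟪ν, y - p⟫_ℝ = ρ * ‖ν‖ := by
    rw [add_sub_cancel_left, real_inner_smul_right, real_inner_self_eq_norm_sq]
    field_simp
  have hlip : F y - F p ≤ K * ρ := by
    rw [← hyp]
    exact (le_abs_self _).trans (hF.dist_le_mul y hy p (Metric.ball_subset_closedBall hp))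
  have := hν y
  nlinarith

lemma add_mul_norm_le_inner_of_subgradient {F : E → ℝ} {p ν w : E} {ρ : ℝ} (hρ : 0 ≤ ρ)
    (hQ : ∀ y ∈ Metric.closedBall w ρ, F y ≤ 0) (hν : ∀ y, F p + ⟪ν, y - p⟫_ℝ ≤ F y) :
    F p + ρ * ‖ν‖ ≤ ⟪ν, p - w⟫_ℝ := by
  set y := w + (ρ / ‖ν‖) • ν
  have hy : y ∈ Metric.closedBall w ρ := by
    rw [Metric.mem_closedBall, dist_eq_norm, add_sub_cancel_left, norm_smul, Real.norm_eq_abs,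
      abs_div, abs_of_nonneg hρ, abs_norm]
    rcases eq_or_ne ‖ν‖ 0 with h | h
    · simp [h, hρ]
    · rw [div_mul_cancel₀ _ h]
  have hinner : ⟪ν, y - p⟫_ℝ = ρ * ‖ν‖ - ⟪ν, p - w⟫_ℝ := by
    have : y - p = (ρ / ‖ν‖) • ν - (p - w) := by simp only [y]; abel
    rw [this, inner_sub_right, real_inner_smul_right, real_inner_self_eq_norm_sq]
    rcases eq_or_ne ‖ν‖ 0 with h | h
    · simp [h]
    · field_simp
  linarith [hν y, hQ y hy]

lemma norm_sub_sq_le_of_subgradient_step {F : E → ℝ} {x ν w : E} {ρ M R lam : ℝ} (hρ : 0 ≤ ρ)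
    (hQ : ∀ y ∈ Metric.closedBall w ρ, F y ≤ 0) (hν : ∀ y, F x + ⟪ν, y - x⟫_ℝ ≤ F y)
    (hνM : ‖ν‖ ≤ M) (hM : 0 < M) (hxw : ‖x - w‖ ≤ R)
    (hlam₁ : max 0 (F x) ≤ lam * M ^ 2) (hlam₂ : lam * M ^ 2 ≤ 2 * max 0 (F x)) :
    ‖x - lam • ν - w‖ ^ 2 ≤ ‖x - w‖ ^ 2 - 2 * ρ / (M ^ 2 * R) * max 0 (F x) ^ 2 := by
  have hM2 : 0 < M ^ 2 := by positivity
  rcases le_or_gt (F x) 0 with hFx | hFx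
  · rw [max_eq_left hFx] at hlam₁ hlam₂ ⊢
    have : lam = 0 := by nlinarith
    simp [this]
  rw [max_eq_right hFx.le] at hlam₁ hlam₂ ⊢
  have hC := add_mul_norm_le_inner_of_subgradient hρ hQ hν
  have hCS : ⟪ν, x - w⟫_ℝ ≤ ‖ν‖ * R :=
    (real_inner_le_norm _ _).trans (mul_le_mul_of_nonneg_left hxw (norm_nonneg _))
  have hFR : F x ≤ ‖ν‖ * R := by nlinarith [norm_nonneg ν]
  have hR : 0 < R := by nlinarith [norm_nonneg ν]
  have hlam : 0 < lam := by nlinarith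
  have hexp : ‖x - lam • ν - w‖ ^ 2 = ‖x - w‖ ^ 2 - 2 * lam * ⟪ν, x - w⟫_ℝ + lam ^ 2 * ‖ν‖ ^ 2 := by
    rw [show x - lam • ν - w = (x - w) - lam • ν by abel, norm_sub_sq_real, real_inner_smul_right,
      norm_smul, Real.norm_of_nonneg hlam.le, real_inner_comm]
    ring
  have hstep : lam ^ 2 * ‖ν‖ ^ 2 ≤ 2 * lam * F x := by
    have : ‖ν‖ ^ 2 ≤ M ^ 2 := pow_le_pow_left₀ (norm_nonneg _) hνM 2
    nlinarith
  -- `(λ M²) (‖ν‖ R) ≥ F(x)²`, so the gain `2 λ ρ ‖ν‖` is at least `2 ρ F(x)² / (M² R)`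
  have hgain : 2 * ρ / (M ^ 2 * R) * F x ^ 2 ≤ 2 * lam * ρ * ‖ν‖ := by
    rw [div_mul_eq_mul_div, div_le_iff₀ (by positivity)]
    have : F x * F x ≤ (lam * M ^ 2) * (‖ν‖ * R) :=
      mul_le_mul hlam₁ hFR hFx.le (by positivity)
    nlinarith
  nlinarith

end InnerProductSpace

lemma exists_closedBall_subset_of_mem_closedBall_interior {E : Type*} [NormedAddCommGroup E]
    [NormedSpace ℝ E] {s : Set E} {x₀ z : E} {R : ℝ} (hR : R ≠ 0)
    (hz : z ∈ Metric.closedBall x₀ R) (hzs : z ∈ interior s) :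
    ∃ w ∈ Metric.ball x₀ R, ∃ ρ > 0, Metric.closedBall w ρ ⊆ s := by
  rw [← closure_ball x₀ hR, mem_closure_iff] at hz
  obtain ⟨w, hws, hw⟩ := hz _ isOpen_interior hzs
  obtain ⟨ρ, hρ, hsub⟩ := Metric.nhds_basis_closedBall.mem_iff.mp (mem_interior_iff_mem_nhds.mp hws)
  exact ⟨w, hw, ρ, hρ, hsub⟩

lemma tendsto_zero_of_sq_decrease {a c : ℕ → ℝ} {K : ℝ} (hK : 0 < K) (ha : ∀ k, 0 ≤ a k)
    (hc : ∀ k, 0 ≤ c k) (hdec : ∀ k, a (k + 1) ≤ a k - K * c k ^ 2) :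
    Tendsto c atTop (𝓝 0) := by
  have hsum : Summable fun k => K * c k ^ 2 := by
    refine summable_of_sum_range_le (c := a 0) (fun k => by positivity) fun N => ?_
    calc ∑ k ∈ Finset.range N, K * c k ^ 2
        ≤ ∑ k ∈ Finset.range N, (a k - a (k + 1)) :=
          Finset.sum_le_sum fun k _ => by linarith [hdec k]
      _ = a 0 - a N := Finset.sum_range_sub' a N
      _ ≤ a 0 := by linarith [ha N]
  have hsqrt := (Real.continuous_sqrt.tendsto _).comp (hsum.tendsto_atTop_zero.const_mul K⁻¹)
  rw [mul_zero, Real.sqrt_zero] at hsqrt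
  refine hsqrt.congr fun k => ?_
  simp only [Function.comp_apply, inv_mul_cancel_left₀ hK.ne', Real.sqrt_sq (hc k)]

lemma le_zero_of_tendsto_subseq {X : Type*} [TopologicalSpace X] {F : X → ℝ} {s : Set X}
    {x : ℕ → X} {φ : ℕ → ℕ} {x' : X} (hF : ContinuousWithinAt F s x') (hxs : ∀ k, x k ∈ s)
    (hφ : StrictMono φ) (hlim : Tendsto (x ∘ φ) atTop (𝓝 x'))
    (hc : Tendsto (fun k => max 0 (F (x k))) atTop (𝓝 0)) : F x' ≤ 0 :=
  le_of_tendsto_of_tendsto' (hF.tendsto.comp (tendsto_nhdsWithin_iff.mpr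
      ⟨hlim, Eventually.of_forall fun k => hxs (φ k)⟩))
    (hc.comp hφ.tendsto_atTop) fun _ => le_max_right _ _

section Algorithm

variable {n m : ℕ} [NeZero m] {f : Fin m → Euc n → ℝ}

lemma le_envl (x : Euc n) (i : Fin m) : f i x ≤ envl f x :=
  Finset.le_sup' (fun j => f j x) (Finset.mem_univ i)

lemma isSubgradAt_envl_sum_smul {x : Euc n} {w : Fin m → ℝ} {ξ : Fin m → Euc n}
    (hw : ∀ i, 0 ≤ w i) (hw₁ : ∑ i, w i = 1) (hactive : ∀ i, f i x < envl f x → w i = 0)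
    (hξ : ∀ i, IsSubgradAt (f i) x (ξ i)) : IsSubgradAt (envl f) x (∑ i, w i • ξ i) := by
  intro y
  have hx : ∑ i, w i * f i x = envl f x := by
    have : ∀ i ∈ Finset.univ, w i * f i x = w i * envl f x := fun i _ => by
      rcases (le_envl x i).lt_or_eq with h | h
      · rw [hactive i h, zero_mul, zero_mul]
      · rw [h]
    rw [Finset.sum_congr rfl this, ← Finset.sum_mul, hw₁, one_mul]
  calc envl f x + ⟪∑ i, w i • ξ i, y - x⟫_ℝ = ∑ i, w i * (f i x + ⟪ξ i, y - x⟫_ℝ) := by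
        simp only [sum_inner, real_inner_smul_left, mul_add, Finset.sum_add_distrib, hx]
    _ ≤ ∑ i, w i * envl f y :=
        Finset.sum_le_sum fun i _ => mul_le_mul_of_nonneg_left ((hξ i y).trans (le_envl y i)) (hw i)
    _ = envl f y := by rw [← Finset.sum_mul, hw₁, one_mul]

variable {M : ℝ} {x : ℕ → Euc n} {lam : ℕ → ℝ}

lemma IsAlgSeq.exists_isSubgradAt (halg : IsAlgSeq f M x lam) (k : ℕ) :
    ∃ ν, IsSubgradAt (envl f) (x k) ν ∧ x (k + 1) = x k - lam k • ν := by
  obtain ⟨-, -, -, w, ξ, hw, hw₁, hactive, hξ, hstep⟩ := halg k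
  exact ⟨_, isSubgradAt_envl_sum_smul hw hw₁ hactive hξ, hstep⟩

variable {r ρ : ℝ} {w : Euc n}

lemma IsAlgSeq.norm_sub_sq_le (halg : IsAlgSeq f M x lam) (hM : 0 < M)
    (hLip : LipschitzOnWith M.toNNReal (envl f) (Metric.closedBall (x 0) r)) (hρ : 0 ≤ ρ)
    (hQ : ∀ y ∈ Metric.closedBall w ρ, envl f y ≤ 0) {k : ℕ} (hk : x k ∈ Metric.ball (x 0) r)
    {R : ℝ} (hR : ‖x k - w‖ ≤ R) :
    ‖x (k + 1) - w‖ ^ 2 ≤ ‖x k - w‖ ^ 2 - 2 * ρ / (M ^ 2 * R) * max 0 (envl f (x k)) ^ 2 := by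
  obtain ⟨-, hlam₁, hlam₂, -⟩ := halg k
  obtain ⟨ν, hν, hstep⟩ := halg.exists_isSubgradAt k
  have hνM : ‖ν‖ ≤ M := by
    simpa [Real.coe_toNNReal M hM.le] using norm_le_of_subgradient_of_lipschitzOnWith hLip hk hν
  rw [hstep]
  exact norm_sub_sq_le_of_subgradient_step hρ hQ hν hνM hM hR hlam₁ hlam₂

lemma IsAlgSeq.norm_sub_le (halg : IsAlgSeq f M x lam) (hM : 0 < M)
    (hLip : LipschitzOnWith M.toNNReal (envl f) (Metric.closedBall (x 0) r)) (hρ : 0 ≤ ρ)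
    (hQ : ∀ y ∈ Metric.closedBall w ρ, envl f y ≤ 0) (hw : w ∈ Metric.ball (x 0) (r / 2)) :
    ∀ k, ‖x k - w‖ ≤ ‖x 0 - w‖ := by
  intro k
  induction k with
  | zero => rfl
  | succ k ih =>
    rw [Metric.mem_ball, dist_eq_norm] at hw
    have hk : x k ∈ Metric.ball (x 0) r := by
      rw [Metric.mem_ball, dist_eq_norm]
      linarith [norm_sub_le_norm_sub_add_norm_sub (x k) w (x 0), norm_sub_rev (x 0) w]
    have hdec := halg.norm_sub_sq_le hM hLip hρ hQ hk le_rfl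
    have : 0 ≤ 2 * ρ / (M ^ 2 * ‖x k - w‖) * max 0 (envl f (x k)) ^ 2 := by positivity
    exact (pow_le_pow_iff_left₀ (norm_nonneg _) (norm_nonneg _) two_ne_zero).mp
      (by linarith) |>.trans ih

end Algorithm

theorem stmt5_general
    {n m : ℕ} [NeZero m] (f : Fin m → Euc n → ℝ)
    (M : ℝ) (hM : 0 < M) (x : ℕ → Euc n) (lam : ℕ → ℝ)
    (halg : IsAlgSeq f M x lam) (x0 : Euc n) (hx0 : x 0 = x0)
    (r : ℝ) (hr : 0 < r)
    (hLip : ∀ y z : Euc n, y ∈ Metric.closedBall x0 r → z ∈ Metric.closedBall x0 r →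
      |envl f y - envl f z| ≤ M * ‖y - z‖)
    (hint : ∃ z : Euc n, z ∈ Metric.closedBall x0 (r / 2) ∧
      z ∈ interior {y : Euc n | envl f y ≤ 0}) :
    (∃ (xs : Euc n) (φ : ℕ → ℕ), StrictMono φ ∧ Tendsto (x ∘ φ) atTop (𝓝 xs)) ∧
    (∀ xs : Euc n, (∃ φ : ℕ → ℕ, StrictMono φ ∧ Tendsto (x ∘ φ) atTop (𝓝 xs)) →
      envl f xs ≤ 0) := by
  subst hx0
  obtain ⟨z, hz, hzQ⟩ := hint
  obtain ⟨w, hw, ρ, hρ, hwQ⟩ :=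
    exists_closedBall_subset_of_mem_closedBall_interior (by positivity) hz hzQ
  have hLip' : LipschitzOnWith M.toNNReal (envl f) (Metric.closedBall (x 0) r) :=
    .of_dist_le_mul fun y hy y' hy' => by
      simpa [Real.coe_toNNReal M hM.le, dist_eq_norm] using hLip y y' hy hy'
  have hxw := halg.norm_sub_le hM hLip' hρ.le hwQ hw
  have hw' : ‖x 0 - w‖ < r / 2 := by rwa [Metric.mem_ball, dist_comm, dist_eq_norm] at hw
  have hx : ∀ k, x k ∈ Metric.ball (x 0) r := fun k => by
    rw [Metric.mem_ball, dist_eq_norm]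
    linarith [norm_sub_le_norm_sub_add_norm_sub (x k) w (x 0), norm_sub_rev (x 0) w, hxw k]
  have hc : Tendsto (fun k => max 0 (envl f (x k))) atTop (𝓝 0) :=
    tendsto_zero_of_sq_decrease (by positivity : 0 < 2 * ρ / (M ^ 2 * (r / 2)))
      (fun k => sq_nonneg ‖x k - w‖) (fun k => le_max_left _ _) fun k =>
      halg.norm_sub_sq_le hM hLip' hρ.le hwQ (hx k) ((hxw k).trans hw'.le)
  have hxr : ∀ k, x k ∈ Metric.closedBall (x 0) r := fun k => Metric.ball_subset_closedBall (hx k)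
  refine ⟨?_, fun xs ⟨φ, hφ, hlim⟩ => ?_⟩
  · obtain ⟨xs, -, φ, hφ, hlim⟩ := (isCompact_closedBall (x 0) r).tendsto_subseq hxr
    exact ⟨xs, φ, hφ, hlim⟩
  · have hxs := Metric.isClosed_closedBall.mem_of_tendsto hlim (.of_forall fun k => hxr (φ k))
    exact le_zero_of_tendsto_subseq (hLip'.continuousOn xs hxs) hxr hφ hlim hc

theorem stmt5
    {n m : ℕ} (hn : 0 < n) [NeZero m] (f : Fin m → Euc n → ℝ)
    (hconv : ∀ i, ConvexOn ℝ Set.univ (f i))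
    (M : ℝ) (hM : 0 < M) (x : ℕ → Euc n) (lam : ℕ → ℝ)
    (halg : IsAlgSeq f M x lam) (x0 : Euc n) (hx0 : x 0 = x0)
    (r : ℝ) (hr : 0 < r)
    (hLip : ∀ y z : Euc n, y ∈ Metric.closedBall x0 r → z ∈ Metric.closedBall x0 r →
      |envl f y - envl f z| ≤ M * ‖y - z‖)
    (hint : ∃ z : Euc n, z ∈ Metric.closedBall x0 (r / 2) ∧
      z ∈ interior {y : Euc n | envl f y ≤ 0}) :
    (∃ (xs : Euc n) (φ : ℕ → ℕ), StrictMono φ ∧ Tendsto (x ∘ φ) atTop (𝓝 xs)) ∧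
    (∀ xs : Euc n, (∃ φ : ℕ → ℕ, StrictMono φ ∧ Tendsto (x ∘ φ) atTop (𝓝 xs)) →
      envl f xs ≤ 0) :=
  stmt5_general f M hM x lam halg x0 hx0 r hr hLip hint

end
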